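/- Let N ≥ 2, let 0 ≤ θ₁ < θ₂ < ⋯ < θ_N < 2π, and set p_j := (cos θ_j, sin θ_j) ∈ ℝ², indices extended cyclically modulo N. Then for every m with 1 ≤ m ≤ N − 1, ∑_{j=1}^N ‖p_{(j+m mod N)} − p_j‖ ≤ 2N sin(πm/N), with equality if and only if all the forward angular step-m gaps θ_{j+m} − θ_j (computed with the periodic extension θ_{j+N} = θ_j + 2π) are equal to 2πm/N. -/
import Mathlib


/-- Periodic extension of a configuration `θ` on the loop of circumference `2π`:
`periodicExt θ (j + N) = periodicExt θ j + 2π`, and `periodicExt θ j = θ j` for `j < N`. -/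
noncomputable def periodicExt {N : ℕ} (θ : Fin N → ℝ) (k : ℕ) : ℝ :=
  if h : 0 < N then θ ⟨k % N, Nat.mod_lt k h⟩ + 2 * Real.pi * (k / N : ℕ) else 0

/-- The point of the unit circle in the Euclidean plane with polar angle `t`. -/
noncomputable def circlePoint (t : ℝ) : EuclideanSpace ℝ (Fin 2) :=
  (WithLp.equiv 2 (Fin 2 → ℝ)).symm ![Real.cos t, Real.sin t]

lemma chord_eq' (a b : ℝ) : ‖circlePoint a - circlePoint b‖ = 2 * |Real.sin ((a - b) / 2)| := by
  have h : ‖circlePoint a - circlePoint b‖ =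
      Real.sqrt ((Real.cos a - Real.cos b)^2 + (Real.sin a - Real.sin b)^2) := by
    rw [EuclideanSpace.norm_eq]
    congr 1
    simp [circlePoint, Fin.sum_univ_two, sq_abs]
  rw [h]
  have h2 : (Real.cos a - Real.cos b)^2 + (Real.sin a - Real.sin b)^2
      = (2 * Real.sin ((a-b)/2))^2 := by
    have hs : Real.sin ((a-b)/2) ^ 2 = 1/2 - Real.cos (2 * ((a-b)/2)) / 2 :=
      Real.sin_sq_eq_half_sub _
    have h21 : 2 * ((a-b)/2) = a - b := by ring
    rw [h21] at hs
    have hc : Real.cos (a - b) = Real.cos a * Real.cos b + Real.sin a * Real.sin b :=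
      Real.cos_sub a b
    have ha : Real.sin a ^2 + Real.cos a ^2 = 1 := Real.sin_sq_add_cos_sq a
    have hb : Real.sin b ^2 + Real.cos b ^2 = 1 := Real.sin_sq_add_cos_sq b
    nlinarith [hs, hc, ha, hb]
  rw [h2, Real.sqrt_sq_eq_abs, abs_mul]
  norm_num

lemma periodicExt_eq' {N : ℕ} (hN : 0 < N) (θ : Fin N → ℝ) (k : ℕ) :
    periodicExt θ k = θ ⟨k % N, Nat.mod_lt k hN⟩ + 2 * Real.pi * (k / N : ℕ) := by
  simp [periodicExt, hN]

/-- For N points p_j = (cos θ_j, sin θ_j) on the unit circle, with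
0 ≤ θ₁ < ⋯ < θ_N < 2π, indices taken mod N, and 1 ≤ m ≤ N − 1, one has
∑_{j=1}^N ‖p_{(j+m mod N)} − p_j‖ ≤ 2N sin(πm/N), with equality if and only if all
forward angular step-m gaps θ_{j+m} − θ_j (periodic extension θ_{j+N} = θ_j + 2π)
equal 2πm/N. -/
theorem circle_step_chord_sum_le (N : ℕ) (hN : 2 ≤ N) (θ : Fin N → ℝ)
    (hmono : StrictMono θ) (hmem : ∀ j, θ j ∈ Set.Ico 0 (2 * Real.pi))
    (m : ℕ) (hm1 : 1 ≤ m) (hm2 : m ≤ N - 1) :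
    (∑ j : Fin N,
        ‖circlePoint (θ ⟨((j : ℕ) + m) % N, Nat.mod_lt _ (by omega)⟩) - circlePoint (θ j)‖)
      ≤ 2 * N * Real.sin (Real.pi * m / N) ∧
    ((∑ j : Fin N,
        ‖circlePoint (θ ⟨((j : ℕ) + m) % N, Nat.mod_lt _ (by omega)⟩) - circlePoint (θ j)‖)
        = 2 * N * Real.sin (Real.pi * m / N) ↔
      ∀ j : Fin N, periodicExt θ ((j : ℕ) + m) - periodicExt θ (j : ℕ)
        = 2 * Real.pi * m / N) := by
  have hN0 : 0 < N := by omega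
  haveI : NeZero N := ⟨by omega⟩
  have hπ : 0 < Real.pi := Real.pi_pos
  have hNR : (0:ℝ) < N := by exact_mod_cast hN0
  obtain ⟨φ, hφdef⟩ : ∃ φ : Fin N → ℝ,
      ∀ j, φ j = periodicExt θ ((j : ℕ) + m) - periodicExt θ (j : ℕ) := ⟨_, fun _ => rfl⟩
  have hExtj : ∀ j : Fin N, periodicExt θ (j : ℕ) = θ j := by
    intro j
    rw [periodicExt_eq' hN0, Nat.div_eq_of_lt j.isLt]
    have : (⟨(j:ℕ) % N, Nat.mod_lt _ hN0⟩ : Fin N) = j := by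
      ext; exact Nat.mod_eq_of_lt j.isLt
    rw [this]; simp
  have hφval : ∀ j : Fin N, φ j =
      θ ⟨((j : ℕ) + m) % N, Nat.mod_lt _ hN0⟩ + 2 * Real.pi * (((j:ℕ)+m)/N : ℕ) - θ j := by
    intro j
    rw [hφdef j, periodicExt_eq' hN0, hExtj]
  -- case analysis data
  have hcase : ∀ j : Fin N, (¬ N ≤ (j:ℕ) + m ∧ ((j:ℕ)+m) % N = (j:ℕ)+m ∧ ((j:ℕ)+m)/N = 0)
      ∨ (N ≤ (j:ℕ) + m ∧ ((j:ℕ)+m) % N = (j:ℕ)+m-N ∧ ((j:ℕ)+m)/N = 1) := by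
    intro j
    by_cases h : N ≤ (j:ℕ) + m
    · right
      refine ⟨h, ?_, ?_⟩
      · rw [Nat.mod_eq_sub_mod h, Nat.mod_eq_of_lt (by have := j.isLt; omega)]
      · rw [Nat.div_eq_sub_div hN0 h, Nat.div_eq_of_lt (by have := j.isLt; omega)]
    · left
      exact ⟨h, Nat.mod_eq_of_lt (by omega), Nat.div_eq_of_lt (by omega)⟩
  have hrange : ∀ j : Fin N, 0 < φ j ∧ φ j < 2 * Real.pi := by
    intro j
    have hj := j.isLt
    rw [hφval j]
    rcases hcase j with ⟨h, hmod, hdiv⟩ | ⟨h, hmod, hdiv⟩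
    · rw [hdiv]
      have hlt : θ j < θ ⟨((j:ℕ)+m) % N, Nat.mod_lt _ hN0⟩ := by
        apply hmono
        rw [Fin.lt_def]
        simp only [hmod]
        omega
      have h1 := (hmem j).1
      have h2 := (hmem ⟨((j:ℕ)+m) % N, Nat.mod_lt _ hN0⟩).2
      constructor
      · push_cast; linarith
      · push_cast; linarith
    · rw [hdiv]
      have hlt : θ ⟨((j:ℕ)+m) % N, Nat.mod_lt _ hN0⟩ < θ j := by
        apply hmono
        rw [Fin.lt_def]
        simp only [hmod]
        omega
      have h1 := (hmem ⟨((j:ℕ)+m) % N, Nat.mod_lt _ hN0⟩).1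
      have h2 := (hmem j).2
      constructor
      · push_cast; linarith
      · push_cast; linarith
  have hsin_pos : ∀ j : Fin N, 0 < Real.sin (φ j / 2) := by
    intro j
    obtain ⟨h1, h2⟩ := hrange j
    apply Real.sin_pos_of_pos_of_lt_pi <;> linarith
  -- chord terms
  have hterm : ∀ j : Fin N,
      ‖circlePoint (θ ⟨((j : ℕ) + m) % N, Nat.mod_lt _ hN0⟩) - circlePoint (θ j)‖
        = 2 * Real.sin (φ j / 2) := by
    intro j
    rw [chord_eq']
    rcases hcase j with ⟨h, hmod, hdiv⟩ | ⟨h, hmod, hdiv⟩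
    · have : (θ ⟨((j:ℕ)+m) % N, Nat.mod_lt _ hN0⟩ - θ j) / 2 = φ j / 2 := by
        rw [hφval j, hdiv]; push_cast; ring
      rw [this, abs_of_pos (hsin_pos j)]
    · have harg : (θ ⟨((j:ℕ)+m) % N, Nat.mod_lt _ hN0⟩ - θ j) / 2 = φ j / 2 - Real.pi := by
        rw [hφval j, hdiv]; push_cast; ring
      rw [harg, Real.sin_sub_pi, abs_neg, abs_of_pos (hsin_pos j)]
  -- sum of gaps
  have hcount : ∑ j : Fin N, (((j : ℕ) + m) / N : ℕ) = m := by
    rw [Fin.sum_univ_eq_sum_range (fun j => (j + m) / N)]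
    have h1 : ∀ j ∈ Finset.range N, (j + m) / N = if N ≤ j + m then 1 else 0 := by
      intro j hj
      rw [Finset.mem_range] at hj
      split_ifs with h
      · rw [Nat.div_eq_sub_div (by omega) h, Nat.div_eq_of_lt (by omega)]
      · exact Nat.div_eq_of_lt (by omega)
    rw [Finset.sum_congr rfl h1, Finset.sum_ite, Finset.sum_const, Finset.sum_const_zero]
    simp only [smul_eq_mul, mul_one, add_zero]
    have : Finset.filter (fun j => N ≤ j + m) (Finset.range N) = Finset.Ico (N - m) N := by
      ext x; simp [Finset.mem_Ico]; omega
    rw [this, Nat.card_Ico]; omega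
  have hbij : ∑ j : Fin N, θ ⟨((j : ℕ) + m) % N, Nat.mod_lt _ hN0⟩ = ∑ j : Fin N, θ j := by
    refine Fintype.sum_equiv (Equiv.addRight (⟨m % N, Nat.mod_lt _ hN0⟩ : Fin N)) _ _ ?_
    intro j
    congr 1
    ext
    show ((j : ℕ) + m) % N = ((j : ℕ) + m % N) % N
    rw [Nat.add_mod_mod]
  have hsum : ∑ j : Fin N, φ j = 2 * Real.pi * m := by
    have e1 : ∀ j : Fin N, φ j =
        (θ ⟨((j : ℕ) + m) % N, Nat.mod_lt _ hN0⟩ - θ j)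
          + 2 * Real.pi * (((j:ℕ)+m)/N : ℕ) := by
      intro j; rw [hφval j]; ring
    rw [Finset.sum_congr rfl (fun j _ => e1 j), Finset.sum_add_distrib,
      Finset.sum_sub_distrib, hbij, sub_self, zero_add, ← Finset.mul_sum]
    norm_cast
    rw [hcount]
  -- Jensen setup
  have hw1 : ∑ _j : Fin N, (N:ℝ)⁻¹ = 1 := by
    rw [Finset.sum_const, Finset.card_univ, Fintype.card_fin, nsmul_eq_mul]
    field_simp
  have hmemIcc : ∀ j : Fin N, j ∈ Finset.univ → φ j / 2 ∈ Set.Icc 0 Real.pi := by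
    intro j _
    obtain ⟨h1, h2⟩ := hrange j
    exact ⟨by linarith, by linarith⟩
  have hcenter : ∑ j : Fin N, (N:ℝ)⁻¹ • (φ j / 2) = Real.pi * m / N := by
    simp only [smul_eq_mul]
    rw [← Finset.mul_sum, ← Finset.sum_div, hsum]
    field_simp
  have hjen : ∑ j : Fin N, (N:ℝ)⁻¹ • Real.sin (φ j / 2) ≤ Real.sin (Real.pi * m / N) := by
    have := strictConcaveOn_sin_Icc.concaveOn.le_map_sum
      (t := Finset.univ) (w := fun _ : Fin N => (N:ℝ)⁻¹) (p := fun j => φ j / 2)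
      (fun i _ => by positivity) hw1 hmemIcc
    rwa [hcenter] at this
  have hchordsum : (∑ j : Fin N,
      ‖circlePoint (θ ⟨((j : ℕ) + m) % N, Nat.mod_lt _ hN0⟩) - circlePoint (θ j)‖)
      = 2 * N * ∑ j : Fin N, (N:ℝ)⁻¹ • Real.sin (φ j / 2) := by
    rw [Finset.mul_sum]
    refine Finset.sum_congr rfl fun j _ => ?_
    rw [hterm j]
    simp only [smul_eq_mul]
    field_simp
  refine ⟨?_, ?_, ?_⟩
  · rw [hchordsum]
    have h2N : (0:ℝ) ≤ 2 * N := by positivity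
    exact mul_le_mul_of_nonneg_left hjen h2N
  · -- equality → gaps equal
    intro heq
    rw [hchordsum] at heq
    have hX : ∑ j : Fin N, (N:ℝ)⁻¹ • Real.sin (φ j / 2) = Real.sin (Real.pi * m / N) := by
      have h2N : (2 * (N:ℝ)) ≠ 0 := by positivity
      exact mul_left_cancel₀ h2N heq
    have hall := strictConcaveOn_sin_Icc.eq_of_map_sum_eq
      (t := Finset.univ) (w := fun _ : Fin N => (N:ℝ)⁻¹) (p := fun j => φ j / 2)
      (fun i _ => by positivity) hw1 hmemIcc (by rw [hcenter, hX])
    intro j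
    have hNφ : (N:ℝ) * φ j = 2 * Real.pi * m := by
      rw [← hsum]
      rw [Finset.sum_congr rfl (fun k _ => show φ k = φ j by
        have := hall (Finset.mem_univ k) (Finset.mem_univ j)
        simpa using (by linarith : φ k = φ j))]
      rw [Finset.sum_const, Finset.card_univ, Fintype.card_fin, nsmul_eq_mul]
    rw [← hφdef j]
    field_simp
    linarith
  · -- gaps equal → equality
    intro hgap
    have e : ∀ j : Fin N,
        ‖circlePoint (θ ⟨((j : ℕ) + m) % N, Nat.mod_lt _ hN0⟩) - circlePoint (θ j)‖
          = 2 * Real.sin (Real.pi * m / N) := by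
      intro j
      rw [hterm j]
      have hφj : φ j = 2 * Real.pi * ↑m / ↑N := by rw [hφdef j]; exact hgap j
      have : φ j / 2 = Real.pi * m / N := by rw [hφj]; ring
      rw [this]
    rw [Finset.sum_congr rfl (fun j _ => e j), Finset.sum_const, Finset.card_univ,
      Fintype.card_fin, nsmul_eq_mul]
    ring
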